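/- arXiv:0910.1784 — 3 statements merged into one kernel-verified Lean document; each statement's English description precedes it below -/
import Mathlib

section
/- For a symmetric positive definite real d×d matrix x, the second partial derivatives of the determinant satisfy ∂²det(x)/(∂x_{ij} ∂x_{kl}) = det(x)·[(x^{-1})_{kl}(x^{-1})_{ij} − (x^{-1})_{il}(x^{-1})_{jk}]. -/
/-!
Differentiating `det` along the line `A + t • single k l 1` gives the cofactor
`adjugate A l k`, because the determinant is affine in each row. Near an invertible `x` the
adjugate equals `det m • m⁻¹`, so the product rule together with `d(m⁻¹) = -x⁻¹ (dm) x⁻¹`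
differentiates the cofactor a second time; for symmetric `x` the indices of `x⁻¹` can then be
rearranged into the stated form.
-/

open Matrix

attribute [local instance] Matrix.frobeniusNormedAddCommGroup Matrix.frobeniusNormedSpace

namespace Matrix

section CommRing

variable {R n : Type*} [CommRing R] [Fintype n] [DecidableEq n]

lemma det_add_smul_single (A : Matrix n n R) (k l : n) (t : R) :
    (A + t • single k l 1).det = A.det + t * A.adjugate l k := by
  have hrow : A + t • single k l 1 = A.updateRow k (A k + t • Pi.single l 1) := by
    ext a b
    rw [updateRow_apply]
    split_ifs with ha
    · subst ha
      simp [single_apply, Pi.single_apply, eq_comm]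
    · simp [Ne.symm ha]
  rw [hrow, det_updateRow_add, updateRow_eq_self, det_updateRow_smul, adjugate_apply]

lemma adjugate_eq_det_smul_inv {A : Matrix n n R} (hA : IsUnit A.det) :
    A.adjugate = A.det • A⁻¹ :=
  calc A.adjugate = A.adjugate * A * A⁻¹ := by
        rw [Matrix.mul_assoc, mul_nonsing_inv A hA, Matrix.mul_one]
    _ = A.det • A⁻¹ := by rw [adjugate_mul, smul_mul, Matrix.one_mul]

end CommRing

section NormedField

variable {𝕜 n : Type*} [NontriviallyNormedField 𝕜] [CompleteSpace 𝕜] [Fintype n]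

noncomputable def entryCLM (a b : n) : Matrix n n 𝕜 →L[𝕜] 𝕜 :=
  (entryLinearMap 𝕜 𝕜 a b).toContinuousLinearMap

@[simp] lemma entryCLM_apply (a b : n) (M : Matrix n n 𝕜) : entryCLM a b M = M a b := rfl

variable [DecidableEq n]

lemma differentiable_det : Differentiable 𝕜 (det : Matrix n n 𝕜 → 𝕜) := by
  have hexpand : (det : Matrix n n 𝕜 → 𝕜) =
      fun M => ∑ σ : Equiv.Perm n, (Equiv.Perm.sign σ : 𝕜) * ∏ i, entryCLM (σ i) i M := by
    ext M
    simp [det_apply, Units.smul_def]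
  rw [hexpand]
  fun_prop

lemma fderiv_det_apply_single (A : Matrix n n 𝕜) (k l : n) :
    fderiv 𝕜 det A (single k l 1) = A.adjugate l k := by
  have hline : HasDerivAt (fun t : 𝕜 => (A + t • single k l 1).det)
      (fderiv 𝕜 det A (single k l 1)) 0 := by
    have h := (differentiable_det A).hasFDerivAt.comp_hasDerivAt_of_eq (0 : 𝕜)
      (((hasDerivAt_id (0 : 𝕜)).smul_const (single k l (1 : 𝕜))).const_add A) (by simp)
    simp only [Function.comp_def, id, one_smul] at h
    exact h
  have haffine : HasDerivAt (fun t : 𝕜 => (A + t • single k l 1).det) (A.adjugate l k) 0 := by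
    simp_rw [det_add_smul_single]
    simpa using ((hasDerivAt_id (0 : 𝕜)).mul_const (A.adjugate l k)).const_add A.det
  exact hline.unique haffine

end NormedField

variable {𝕜 n : Type*} [RCLike 𝕜] [Fintype n] [DecidableEq n] {x : Matrix n n 𝕜}

section FrobeniusRing

-- Kept local: the ring's topology is not syntactically `instTopologicalSpaceMatrix`, which
-- `fderiv` on matrices uses, so rewriting would fail elsewhere.
attribute [local instance] Matrix.frobeniusNormedRing Matrix.frobeniusNormedAlgebra

lemma hasFDerivAt_inv (hx : IsUnit x.det) :
    HasFDerivAt (fun m : Matrix n n 𝕜 => m⁻¹)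
      (-ContinuousLinearMap.mulLeftRight 𝕜 _ x⁻¹ x⁻¹) x := by
  have h := hasFDerivAt_ringInverse (𝕜 := 𝕜) ((isUnit_iff_isUnit_det x).2 hx).unit
  rw [show (fun m : Matrix n n 𝕜 => m⁻¹) = Ring.inverse from funext nonsing_inv_eq_ringInverse]
  simpa using h

end FrobeniusRing

lemma differentiableAt_inv (hx : IsUnit x.det) :
    DifferentiableAt 𝕜 (fun m : Matrix n n 𝕜 => m⁻¹) x :=
  (hasFDerivAt_inv hx).differentiableAt

lemma fderiv_inv_apply (hx : IsUnit x.det) (H : Matrix n n 𝕜) :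
    fderiv 𝕜 (fun m : Matrix n n 𝕜 => m⁻¹) x H = -(x⁻¹ * H * x⁻¹) := by
  have h := congrArg (fun L => L H) (hasFDerivAt_inv hx).fderiv
  simp only [_root_.neg_apply, ContinuousLinearMap.mulLeftRight_apply] at h
  exact h

lemma adjugate_eventuallyEq_det_smul_inv (hx : IsUnit x.det) :
    adjugate =ᶠ[nhds x] fun m => m.det • m⁻¹ := by
  filter_upwards [(differentiable_det (𝕜 := 𝕜) x).continuousAt.eventually_ne hx.ne_zero]
    with m hm using adjugate_eq_det_smul_inv hm.isUnit

lemma differentiableAt_adjugate (hx : IsUnit x.det) : DifferentiableAt 𝕜 adjugate x :=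
  ((differentiable_det x).smul (differentiableAt_inv hx)).congr_of_eventuallyEq
    (adjugate_eventuallyEq_det_smul_inv hx)

lemma fderiv_adjugate_apply (hx : IsUnit x.det) (H : Matrix n n 𝕜) :
    fderiv 𝕜 adjugate x H = fderiv 𝕜 det x H • x⁻¹ - x.det • (x⁻¹ * H * x⁻¹) := by
  have h : HasFDerivAt (fun m : Matrix n n 𝕜 => m.det • m⁻¹)
      (x.det • fderiv 𝕜 (fun m : Matrix n n 𝕜 => m⁻¹) x + (fderiv 𝕜 det x).smulRight x⁻¹) x :=
    (differentiable_det x).hasFDerivAt.smul (differentiableAt_inv hx).hasFDerivAt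
  rw [(adjugate_eventuallyEq_det_smul_inv hx).fderiv_eq, h.fderiv]
  simp [fderiv_inv_apply hx, sub_eq_add_neg, add_comm]

theorem fderiv_fderiv_det_apply_single (hx : IsUnit x.det) (i j k l : n) :
    fderiv 𝕜 (fun m : Matrix n n 𝕜 => fderiv 𝕜 det m (single k l 1)) x (single i j 1)
      = x.det * (x⁻¹ j i * x⁻¹ l k - x⁻¹ l i * x⁻¹ j k) := by
  have hcofactor : (fun m : Matrix n n 𝕜 => fderiv 𝕜 det m (single k l 1)) =
      entryCLM l k ∘ adjugate :=
    funext fun m => fderiv_det_apply_single m k l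
  have h : HasFDerivAt (entryCLM l k ∘ adjugate)
      ((entryCLM l k).comp (fderiv 𝕜 adjugate x)) x :=
    (entryCLM l k).hasFDerivAt.comp x (differentiableAt_adjugate hx).hasFDerivAt
  rw [hcofactor, h.fderiv]
  simp [fderiv_adjugate_apply hx, fderiv_det_apply_single, adjugate_eq_det_smul_inv hx,
    mul_apply, single_apply, ite_and, Finset.sum_ite_eq]
  ring

end Matrix

/-- For a symmetric positive definite real `d × d` matrix `x`, the second partial derivatives of
the determinant satisfy
`∂² det / (∂ x_{ij} ∂ x_{kl}) = det x * ((x⁻¹)_{kl} (x⁻¹)_{ij} − (x⁻¹)_{il} (x⁻¹)_{jk})`. -/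
theorem det_second_partial_deriv_posDef {d : ℕ}
    (x : Matrix (Fin d) (Fin d) ℝ) (hx : x.PosDef) (i j k l : Fin d) :
    fderiv ℝ (fun m : Matrix (Fin d) (Fin d) ℝ =>
        fderiv ℝ (fun m' : Matrix (Fin d) (Fin d) ℝ => m'.det) m
          (Matrix.single k l 1)) x (Matrix.single i j 1)
      = x.det * (x⁻¹ k l * x⁻¹ i j - x⁻¹ i l * x⁻¹ j k) := by
  have hsymm : ∀ p q, x⁻¹ p q = x⁻¹ q p := fun p q => by
    simpa using (hx.isHermitian.inv.apply p q).symm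
  rw [fderiv_fderiv_det_apply_single hx.det_pos.ne'.isUnit, hsymm j i, hsymm l k, hsymm l i]
  ring
end

section
/- Let x be a symmetric positive definite real d×d matrix, A a symmetric positive semidefinite real d×d matrix, and α ∈ [1/2, 1]. Then Tr(x^{2α−2} A) ≤ Tr(x^{2α−1}) · Tr(A x^{-1}). -/
/-!
In an eigenbasis `U` of `x` with eigenvalues `λᵢ > 0`, every trace `Tr (x ^ r * B)` becomes
`∑ᵢ λᵢ ^ r * cᵢ` with `cᵢ = (Uᴴ B U)ᵢᵢ`, and `x⁻¹ = x ^ (-1)`. For `B = A` positive semidefinite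
the weights `cᵢ` are nonnegative, so writing `λᵢ ^ (2α - 2) = λᵢ ^ (2α - 1) * λᵢ⁻¹` the claim is
`∑ᵢ aᵢ bᵢ ≤ (∑ᵢ aᵢ) (∑ᵢ bᵢ)` for nonnegative `aᵢ, bᵢ`.
-/

open Matrix

/-- The real power `x ^ r` of a Hermitian matrix, via spectral decomposition. -/
noncomputable def matRpow {d : ℕ} {x : Matrix (Fin d) (Fin d) ℝ} (hx : x.IsHermitian) (r : ℝ) :
    Matrix (Fin d) (Fin d) ℝ :=
  (hx.eigenvectorUnitary : Matrix (Fin d) (Fin d) ℝ) *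
    Matrix.diagonal (fun i => hx.eigenvalues i ^ r) *
    star (hx.eigenvectorUnitary : Matrix (Fin d) (Fin d) ℝ)

theorem Finset.sum_mul_le_sum_mul_sum {ι R : Type*} [CommSemiring R] [PartialOrder R]
    [IsOrderedRing R] (s : Finset ι) {f g : ι → R} (hf : ∀ i ∈ s, 0 ≤ f i)
    (hg : ∀ i ∈ s, 0 ≤ g i) : ∑ i ∈ s, f i * g i ≤ (∑ i ∈ s, f i) * ∑ i ∈ s, g i := by
  rw [Finset.mul_sum]
  exact Finset.sum_le_sum fun i hi =>
    mul_le_mul_of_nonneg_right (Finset.single_le_sum hf hi) (hg i hi)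

section MatRpow

variable {d : ℕ} {x : Matrix (Fin d) (Fin d) ℝ}

theorem matRpow_eq_cfc (hx : x.IsHermitian) (r : ℝ) :
    matRpow hx r = cfc (fun t : ℝ => t ^ r) x := by
  rw [hx.cfc_eq, IsHermitian.cfc, Unitary.conjStarAlgAut_apply, matRpow]
  rfl

theorem matRpow_neg_one (hx : x.PosDef) : matRpow hx.1 (-1) = x⁻¹ := by
  simp only [matRpow_eq_cfc, Real.rpow_neg_one]
  rw [nonsing_inv_eq_ringInverse]
  exact cfc_ringInverse_id (R := ℝ) x hx.isUnit hx.1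

theorem trace_matRpow_mul (hx : x.IsHermitian) (r : ℝ) (B : Matrix (Fin d) (Fin d) ℝ) :
    (matRpow hx r * B).trace = ∑ i, hx.eigenvalues i ^ r *
      (star (hx.eigenvectorUnitary : Matrix (Fin d) (Fin d) ℝ) * B * hx.eigenvectorUnitary :
        Matrix (Fin d) (Fin d) ℝ) i i := by
  rw [matRpow, Matrix.mul_assoc, trace_mul_cycle, trace_mul_comm]
  simp [trace, diagonal_mul]

theorem trace_matRpow (hx : x.IsHermitian) (r : ℝ) :
    (matRpow hx r).trace = ∑ i, hx.eigenvalues i ^ r := by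
  simpa using trace_matRpow_mul hx r 1

end MatRpow

theorem trace_rpow_mul_le_general {d : ℕ} (x A : Matrix (Fin d) (Fin d) ℝ) (hx : x.PosDef)
    (hA : A.PosSemidef) (α : ℝ) :
    (matRpow hx.1 (2 * α - 2) * A).trace ≤
      (matRpow hx.1 (2 * α - 1)).trace * (A * x⁻¹).trace := by
  rw [trace_mul_comm A, ← matRpow_neg_one hx, trace_matRpow_mul, trace_matRpow_mul,
    trace_matRpow]
  set U : Matrix (Fin d) (Fin d) ℝ := (hx.1.eigenvectorUnitary : Matrix (Fin d) (Fin d) ℝ)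
  set ev := hx.1.eigenvalues
  have hev : ∀ i, 0 < ev i := hx.eigenvalues_pos
  have hdiag : ∀ i, 0 ≤ (star U * A * U) i i := fun i => by
    simpa [star_eq_conjTranspose] using (hA.conjTranspose_mul_mul_same U).diag_nonneg (i := i)
  calc ∑ i, ev i ^ (2 * α - 2) * (star U * A * U) i i
      = ∑ i, ev i ^ (2 * α - 1) * (ev i ^ (-1 : ℝ) * (star U * A * U) i i) := by
        refine Finset.sum_congr rfl fun i _ => ?_
        rw [← mul_assoc, ← Real.rpow_add (hev i)]
        ring_nf
    _ ≤ _ := Finset.sum_mul_le_sum_mul_sum _ (fun i _ => Real.rpow_nonneg (hev i).le _)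
        fun i _ => mul_nonneg (Real.rpow_nonneg (hev i).le _) (hdiag i)

/-- For `x` symmetric positive definite, `A` symmetric positive semidefinite, and
`α ∈ [1/2, 1]`: `Tr (x^{2α−2} A) ≤ Tr (x^{2α−1}) * Tr (A x⁻¹)`. -/
theorem trace_rpow_mul_le {d : ℕ} (x A : Matrix (Fin d) (Fin d) ℝ) (hx : x.PosDef)
    (hA : A.PosSemidef) (α : ℝ) (hα : α ∈ Set.Icc (1 / 2 : ℝ) 1) :
    (matRpow hx.1 (2 * α - 2) * A).trace ≤
      (matRpow hx.1 (2 * α - 1)).trace * (A * x⁻¹).trace :=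
  trace_rpow_mul_le_general x A hx hA α
end

section
/- Let f, g be symmetric real d×d matrices and x a symmetric positive definite real d×d matrix. Then (1/2)·Σ_{i,j,k,l} [(x^{-1})_{kl}(x^{-1})_{ij} − (x^{-1})_{il}(x^{-1})_{jk}]·[f_{ik}g_{jl} + f_{il}g_{jk} + f_{jk}g_{il} + f_{jl}g_{ik}] = Tr(f x^{-1} g x^{-1}) − Tr(f x^{-1})·Tr(g x^{-1}). -/
/-! The bracket is the symmetrization of `f i k * g j l` under `i ↔ j` and `k ↔ l`, and relabelling
the summation indices moves this symmetrization onto the weight. For symmetric `A = x⁻¹` the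
symmetrized weight is `4 A_ij A_kl - 2 A_il A_jk - 2 A_ik A_jl`, whose three contractions against
`f i k * g j l` are `Tr (f A g A)`, `Tr (f A g A)` and `Tr (f A) Tr (g A)`. -/

open Matrix Finset

section FourfoldSums

variable {n M : Type*} [Fintype n] [AddCommMonoid M]

theorem sum₄_swap₁₂ (F : n → n → n → n → M) :
    ∑ i, ∑ j, ∑ k, ∑ l, F i j k l = ∑ i, ∑ j, ∑ k, ∑ l, F j i k l :=
  sum_comm

theorem sum₄_swap₂₃ (F : n → n → n → n → M) :
    ∑ i, ∑ j, ∑ k, ∑ l, F i j k l = ∑ i, ∑ j, ∑ k, ∑ l, F i k j l :=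
  sum_congr rfl fun _ _ => sum_comm

theorem sum₄_swap₃₄ (F : n → n → n → n → M) :
    ∑ i, ∑ j, ∑ k, ∑ l, F i j k l = ∑ i, ∑ j, ∑ k, ∑ l, F i j l k :=
  sum_congr rfl fun _ _ => sum_congr rfl fun _ _ => sum_comm

end FourfoldSums

section Symmetrize

variable {n R : Type*} [Fintype n]

def symmetrize₄ [Add R] (φ : n → n → n → n → R) (i j k l : n) : R :=
  φ i j k l + φ i j l k + φ j i k l + φ j i l k

theorem sum_mul_symmetrize₄ [NonUnitalNonAssocSemiring R] (w φ : n → n → n → n → R) :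
    ∑ i, ∑ j, ∑ k, ∑ l, w i j k l * symmetrize₄ φ i j k l
      = ∑ i, ∑ j, ∑ k, ∑ l, symmetrize₄ w i j k l * φ i j k l := by
  simp only [symmetrize₄, mul_add, add_mul, sum_add_distrib]
  rw [sum₄_swap₃₄ fun i j k l => w i j k l * φ i j l k,
    sum₄_swap₁₂ fun i j k l => w i j k l * φ j i k l,
    sum₄_swap₁₂ fun i j k l => w i j k l * φ j i l k,
    sum₄_swap₃₄ fun i j k l => w j i k l * φ i j l k]

end Symmetrize

section Traces

variable {n R : Type*} [Fintype n] [CommSemiring R]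

theorem trace_mul_mul_mul_eq_sum (a b c e : Matrix n n R) :
    (a * b * c * e).trace = ∑ i, ∑ j, ∑ k, ∑ l, a i j * b j k * c k l * e l i := by
  simp only [trace, Matrix.diag, mul_apply, sum_mul]
  rw [sum₄_swap₂₃, sum₄_swap₃₄, sum₄_swap₂₃]

theorem sum_mul_mul_eq_trace_mul_mul_transpose (A f g : Matrix n n R) :
    ∑ i, ∑ j, ∑ k, ∑ l, A i j * A k l * (f i k * g j l) = (f * A * gᵀ * Aᵀ).trace := by
  rw [trace_mul_mul_mul_eq_sum, sum₄_swap₂₃, sum₄_swap₃₄]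
  simp only [transpose_apply]
  congr! 4
  ring

theorem sum_mul_mul_eq_trace_mul_transpose_mul_transpose (A f g : Matrix n n R) :
    ∑ i, ∑ j, ∑ k, ∑ l, A i l * A j k * (f i k * g j l) = (f * Aᵀ * g * Aᵀ).trace := by
  rw [trace_mul_mul_mul_eq_sum, sum₄_swap₂₃]
  simp only [transpose_apply]
  congr! 4
  ring

theorem sum_mul_mul_eq_trace_mul_trace (A f g : Matrix n n R) :
    ∑ i, ∑ j, ∑ k, ∑ l, A i k * A j l * (f i k * g j l) = (f * Aᵀ).trace * (g * Aᵀ).trace := by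
  simp only [trace, Matrix.diag, mul_apply, transpose_apply, sum_mul_sum]
  congr! 4
  ring

end Traces

theorem sum_mul_symmetrize₄_eq_two_mul_trace_sub {n R : Type*} [Fintype n] [CommRing R]
    {A f g : Matrix n n R} (hA : A.IsSymm) (hg : g.IsSymm) :
    ∑ i, ∑ j, ∑ k, ∑ l, (A k l * A i j - A i l * A j k) *
        symmetrize₄ (fun i j k l => f i k * g j l) i j k l
      = 2 * ((f * A * g * A).trace - (f * A).trace * (g * A).trace) := by
  have hweight (i j k l : n) :
      symmetrize₄ (fun i j k l => A k l * A i j - A i l * A j k) i j k l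
        = 4 * (A i j * A k l) - 2 * (A i l * A j k) - 2 * (A i k * A j l) := by
    simp only [symmetrize₄, hA.apply k l, hA.apply i j]
    ring
  calc _ = ∑ i, ∑ j, ∑ k, ∑ l, (4 * (A i j * A k l * (f i k * g j l))
          - 2 * (A i l * A j k * (f i k * g j l)) - 2 * (A i k * A j l * (f i k * g j l))) := by
        rw [sum_mul_symmetrize₄]
        congr! 4 with i _ j _ k _ l _
        rw [hweight]
        ring
    _ = 4 * (f * A * gᵀ * Aᵀ).trace - 2 * (f * Aᵀ * g * Aᵀ).trace
          - 2 * ((f * Aᵀ).trace * (g * Aᵀ).trace) := by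
        simp only [sum_sub_distrib, ← mul_sum, sum_mul_mul_eq_trace_mul_mul_transpose,
          sum_mul_mul_eq_trace_mul_transpose_mul_transpose, sum_mul_mul_eq_trace_mul_trace]
    _ = _ := by
        rw [hA.eq, hg.eq]
        ring

theorem quadratic_variation_sum_identity_general {d : ℕ} (f g x : Matrix (Fin d) (Fin d) ℝ)
    (hg : g.IsSymm) (hx : x.PosDef) :
    (1 / 2 : ℝ) * ∑ i : Fin d, ∑ j : Fin d, ∑ k : Fin d, ∑ l : Fin d,
        (x⁻¹ k l * x⁻¹ i j - x⁻¹ i l * x⁻¹ j k) *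
          (f i k * g j l + f i l * g j k + f j k * g i l + f j l * g i k)
      = (f * x⁻¹ * g * x⁻¹).trace - (f * x⁻¹).trace * (g * x⁻¹).trace := by
  have hx_inv : x⁻¹.IsSymm := (isHermitian_iff_isSymm.mp hx.isHermitian).inv
  have h := sum_mul_symmetrize₄_eq_two_mul_trace_sub (f := f) hx_inv hg
  simp only [symmetrize₄] at h
  linear_combination h / 2

/-- The quadratic-variation summation identity: for `f`, `g` symmetric and `x` symmetric positive
definite,
`(1/2) Σ_{i,j,k,l} [(x⁻¹)_{kl}(x⁻¹)_{ij} − (x⁻¹)_{il}(x⁻¹)_{jk}] ·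
  [f_{ik} g_{jl} + f_{il} g_{jk} + f_{jk} g_{il} + f_{jl} g_{ik}]
  = Tr (f x⁻¹ g x⁻¹) − Tr (f x⁻¹) Tr (g x⁻¹)`. -/
theorem quadratic_variation_sum_identity {d : ℕ} (f g x : Matrix (Fin d) (Fin d) ℝ)
    (hf : f.IsSymm) (hg : g.IsSymm) (hx : x.PosDef) :
    (1 / 2 : ℝ) * ∑ i : Fin d, ∑ j : Fin d, ∑ k : Fin d, ∑ l : Fin d,
        (x⁻¹ k l * x⁻¹ i j - x⁻¹ i l * x⁻¹ j k) *
          (f i k * g j l + f i l * g j k + f j k * g i l + f j l * g i k)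
      = (f * x⁻¹ * g * x⁻¹).trace - (f * x⁻¹).trace * (g * x⁻¹).trace :=
  quadratic_variation_sum_identity_general f g x hg hx
end
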